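/- arXiv:hep-th/9911220 — 3 statements merged into one kernel-verified Lean document; each statement's English description precedes it below -/
import Mathlib

section
/- For every integer k ≥ 2, let c_n denote the coefficient of s^{nk-4} in the polynomial (∑_{j=0}^{k-2} s^j)^4 for n = 1, 2, 3. Then c_1 - c_2 + c_3 = k(4 - k^2)/3 - 1. -/
/-!
Since `(∑_{j<N} s^j)^4 = (1 - s^N)^4 / (1 - s)^4`, the coefficient of `s^m` is
`∑_i (-1)^i (4 choose i) ((m - iN + 3) choose 3)` over those `i` with `iN ≤ m`. The cubic
`(t + 1)(t + 2)(t + 3)/6 = (t + 3) choose 3` also vanishes at `t = -1, -2, -3`, so for `N = k - 1`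
and `m = nk - 4` each term is either absent or given by this cubic, and `c₁ - c₂ + c₃` becomes a
polynomial identity in `k`.
-/

open Polynomial

/-- Coefficient of a polynomial at an integer index; zero for negative indices. -/
def coeffZ (p : Polynomial ℤ) (n : ℤ) : ℤ :=
  if h : 0 ≤ n then p.coeff n.toNat else 0

theorem coe_geom_sum_pow_succ_eq {R : Type*} [CommRing R] (N d : ℕ) :
    (((∑ j ∈ Finset.range N, (X : R[X]) ^ j) ^ (d + 1) : R[X]) : PowerSeries R) =
      (∑ i ∈ Finset.range (d + 2),
          PowerSeries.C ((-1) ^ i * ((d + 1).choose i : R)) * PowerSeries.X ^ (i * N)) *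
        (PowerSeries.invOneSubPow R (d + 1)).val := by
  have hgeom : (∑ j ∈ Finset.range N, (PowerSeries.X : PowerSeries R) ^ j) * (1 - PowerSeries.X)
      = 1 - PowerSeries.X ^ N := by
    linear_combination -geom_sum_mul (PowerSeries.X : PowerSeries R) N
  have hbinom : (1 - PowerSeries.X ^ N : PowerSeries R) ^ (d + 1) = ∑ i ∈ Finset.range (d + 2),
      PowerSeries.C ((-1) ^ i * ((d + 1).choose i : R)) * PowerSeries.X ^ (i * N) := by
    rw [sub_eq_neg_add, add_pow]
    refine Finset.sum_congr rfl fun i _ => ?_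
    rw [neg_pow, pow_mul', map_mul, map_pow, map_neg, map_one, map_natCast]
    ring
  rw [← hbinom, ← hgeom, mul_pow, mul_assoc, ← PowerSeries.invOneSubPow_inv_eq_one_sub_pow,
    Units.inv_val, mul_one, ← Polynomial.coeToPowerSeries.ringHom_apply, map_pow, map_sum]
  simp [Polynomial.coeToPowerSeries.ringHom_apply]

/-- The coefficient of `X ^ t` in `(1 - X)⁻¹ ^ (d + 1)`, extended by `0` to `t < 0`. -/
def invOneSubPowCoeff (d : ℕ) (t : ℤ) : ℤ :=
  if 0 ≤ t then ((t.toNat + d).choose d : ℤ) else 0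

theorem invOneSubPowCoeff_of_neg {d : ℕ} {t : ℤ} (ht : t < 0) : invOneSubPowCoeff d t = 0 :=
  if_neg ht.not_ge

theorem invOneSubPowCoeff_natCast_sub (d a b : ℕ) :
    invOneSubPowCoeff d ((a : ℤ) - b) = if b ≤ a then ((d + (a - b)).choose d : ℤ) else 0 := by
  unfold invOneSubPowCoeff
  split_ifs <;> first | omega | rw [show ((a : ℤ) - b).toNat + d = d + (a - b) by omega]

theorem invOneSubPowCoeff_eq_ascPochhammer {d : ℕ} {t : ℤ} (ht : -(d : ℤ) ≤ t) :
    (invOneSubPowCoeff d t : ℚ) = (ascPochhammer ℚ d).eval ((t : ℚ) + 1) / d.factorial := by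
  unfold invOneSubPowCoeff
  split_ifs with h
  · obtain ⟨n, rfl⟩ := Int.eq_ofNat_of_zero_le h
    rw [eq_div_iff (by positivity), Int.cast_natCast, Int.cast_natCast, ← Nat.cast_add_one,
      ascPochhammer_nat_eq_natCast_ascFactorial, Nat.ascFactorial_eq_factorial_mul_choose,
      Int.toNat_natCast]
    push_cast
    ring
  · obtain ⟨k, hk, rfl⟩ : ∃ k : ℕ, k < d ∧ t = -(k : ℤ) - 1 := ⟨(-t - 1).toNat, by omega, by omega⟩
    push_cast
    rw [sub_add_cancel, ascPochhammer_eval_neg_coe_nat_of_lt hk, zero_div]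

theorem coeffZ_geom_sum_pow (N d : ℕ) (m : ℤ) :
    coeffZ ((∑ j ∈ Finset.range N, (X : ℤ[X]) ^ j) ^ (d + 1)) m =
      ∑ i ∈ Finset.range (d + 2), (-1) ^ i * ((d + 1).choose i : ℤ) *
        invOneSubPowCoeff d (m - i * N) := by
  rcases lt_or_ge m 0 with hm | hm
  · rw [coeffZ, dif_neg hm.not_ge]
    refine (Finset.sum_eq_zero fun i _ => ?_).symm
    rw [invOneSubPowCoeff_of_neg (by nlinarith), mul_zero]
  · obtain ⟨m, rfl⟩ := Int.eq_ofNat_of_zero_le hm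
    rw [coeffZ, dif_pos hm, Int.toNat_natCast, ← Polynomial.coeff_coe, coe_geom_sum_pow_succ_eq,
      Finset.sum_mul, map_sum]
    refine Finset.sum_congr rfl fun i _ => ?_
    rw [mul_assoc, PowerSeries.coeff_C_mul, PowerSeries.coeff_X_pow_mul',
      PowerSeries.invOneSubPow_val_succ_eq_mk_add_choose, ← Nat.cast_mul,
      invOneSubPowCoeff_natCast_sub]
    split_ifs <;> simp

theorem lg_signature_surface (k : ℕ) (hk : 2 ≤ k)
    (c : ℕ → ℤ)
    (hc : ∀ n, c n = coeffZ ((∑ j ∈ Finset.range (k - 1), (X : Polynomial ℤ) ^ j) ^ 4)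
      ((n : ℤ) * k - 4)) :
    ((c 1 - c 2 + c 3 : ℤ) : ℚ) = (k : ℚ) * (4 - (k : ℚ) ^ 2) / 3 - 1 := by
  have hN : ((k - 1 : ℕ) : ℤ) = k - 1 := by omega
  simp only [hc, coeffZ_geom_sum_pow (d := 3), Finset.sum_range_succ, Finset.sum_range_zero, hN]
  push_cast
  -- Every shifted index `n * k - 4 - i * (k - 1)` is either negative or at least `-3`.
  simp (disch := omega) only [invOneSubPowCoeff_of_neg, invOneSubPowCoeff_eq_ascPochhammer]
  simp only [ascPochhammer_succ_eval, ascPochhammer_zero, eval_one]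
  push_cast [Nat.choose_succ_succ, Nat.choose_zero_right, Nat.choose_zero_succ, Nat.factorial]
  ring
end

section
/- Let u, v ∈ ℂ and let s ∈ ℂ satisfy s² = u² + v². Define R₄(X) = X⁴ - 4π²u²v²X³ - π⁴(4u⁶v² + 4u²v⁶ + 2u⁴v⁴)X² - 4π⁶u⁶v⁶X + π⁸u⁸v⁸, and set α₁ = π²uv(uv - (u²+v²) - (u-v)s), α₂ = π²uv(uv - (u²+v²) + (u-v)s), α₃ = π²uv(uv + (u²+v²) - (u+v)s), α₄ = π²uv(uv + (u²+v²) + (u+v)s). Then R₄(X) = (X-α₁)(X-α₂)(X-α₃)(X-α₄) as polynomials in ℂ[X]. -/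
open Polynomial Complex

theorem R4_factorization (u v s : ℂ) (hs : s ^ 2 = u ^ 2 + v ^ 2) :
    (X ^ 4 - C (4 * (Real.pi : ℂ) ^ 2 * u ^ 2 * v ^ 2) * X ^ 3
      - C ((Real.pi : ℂ) ^ 4 * (4 * u ^ 6 * v ^ 2 + 4 * u ^ 2 * v ^ 6 + 2 * u ^ 4 * v ^ 4)) * X ^ 2
      - C (4 * (Real.pi : ℂ) ^ 6 * u ^ 6 * v ^ 6) * X
      + C ((Real.pi : ℂ) ^ 8 * u ^ 8 * v ^ 8) : Polynomial ℂ)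
    = (X - C ((Real.pi : ℂ) ^ 2 * u * v * (u * v - (u ^ 2 + v ^ 2) - (u - v) * s)))
      * (X - C ((Real.pi : ℂ) ^ 2 * u * v * (u * v - (u ^ 2 + v ^ 2) + (u - v) * s)))
      * (X - C ((Real.pi : ℂ) ^ 2 * u * v * (u * v + (u ^ 2 + v ^ 2) - (u + v) * s)))
      * (X - C ((Real.pi : ℂ) ^ 2 * u * v * (u * v + (u ^ 2 + v ^ 2) + (u + v) * s))) := by
  have hC : (C s : Polynomial ℂ) ^ 2 = C u ^ 2 + C v ^ 2 := by
    rw [← map_pow, hs]; push_cast [map_add, map_pow]; ring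
  simp only [map_mul, map_add, map_sub, map_pow, map_ofNat]
  set U := (C u : Polynomial ℂ)
  set V := (C v : Polynomial ℂ)
  set S := (C s : Polynomial ℂ)
  set P := (C (Real.pi : ℂ) : Polynomial ℂ)
  linear_combination
    ((P^2*U*V*(U-V))^2 * ((X - P^2*U*V*(U*V + (U^2+V^2)))^2 - (P^2*U*V*(U+V))^2*(U^2+V^2))
     + (P^2*U*V*(U+V))^2 * ((X - P^2*U*V*(U*V - (U^2+V^2)))^2 - (P^2*U*V*(U-V))^2*(U^2+V^2))
     - (P^2*U*V*(U-V))^2*(P^2*U*V*(U+V))^2*(S^2 - (U^2+V^2))) * hC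
end

section
/- Let u, v ∈ ℂ and let t ∈ ℂ satisfy t² = v² - u². Define S₄(X) = X⁴ + 4π²u²v²X³ + π⁴(4u⁶v² + 4u²v⁶ - 2u⁴v⁴)X² + 4π⁶u⁶v⁶X + π⁸u⁸v⁸, and set β₁ = π²uv(-uv - i(u²-v²) + (u-iv)t), β₂ = π²uv(-uv - i(u²-v²) - (u-iv)t), β₃ = π²uv(-uv + i(u²-v²) + (u+iv)t), β₄ = π²uv(-uv + i(u²-v²) - (u+iv)t). Then S₄(X) = (X-β₁)(X-β₂)(X-β₃)(X-β₄) in ℂ[X]. -/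
open Polynomial Complex

theorem S4_factorization (u v t : ℂ) (ht : t ^ 2 = v ^ 2 - u ^ 2) :
    (X ^ 4 + C (4 * (Real.pi : ℂ) ^ 2 * u ^ 2 * v ^ 2) * X ^ 3
      + C ((Real.pi : ℂ) ^ 4 * (4 * u ^ 6 * v ^ 2 + 4 * u ^ 2 * v ^ 6 - 2 * u ^ 4 * v ^ 4)) * X ^ 2
      + C (4 * (Real.pi : ℂ) ^ 6 * u ^ 6 * v ^ 6) * X
      + C ((Real.pi : ℂ) ^ 8 * u ^ 8 * v ^ 8) : Polynomial ℂ)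
    = (X - C ((Real.pi : ℂ) ^ 2 * u * v * (-(u * v) - I * (u ^ 2 - v ^ 2) + (u - I * v) * t)))
      * (X - C ((Real.pi : ℂ) ^ 2 * u * v * (-(u * v) - I * (u ^ 2 - v ^ 2) - (u - I * v) * t)))
      * (X - C ((Real.pi : ℂ) ^ 2 * u * v * (-(u * v) + I * (u ^ 2 - v ^ 2) + (u + I * v) * t)))
      * (X - C ((Real.pi : ℂ) ^ 2 * u * v * (-(u * v) + I * (u ^ 2 - v ^ 2) - (u + I * v) * t)))
      := by
  have hI : (I:ℂ)^2 = -1 := Complex.I_sq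
  have h12 : ((Real.pi : ℂ) ^ 2 * u * v * (-(u * v) - I * (u ^ 2 - v ^ 2) + (u - I * v) * t)) *
      ((Real.pi : ℂ) ^ 2 * u * v * (-(u * v) - I * (u ^ 2 - v ^ 2) - (u - I * v) * t))
      = (Real.pi : ℂ)^4 * u^4 * v^4 := by
    linear_combination (-((Real.pi:ℂ)^4*u^2*v^2*(u^2-2*I*u*v+I^2*v^2)))*ht
      + ((Real.pi:ℂ)^4*u^2*v^2*(u^2-v^2)*u^2)*hI
  have h34 : ((Real.pi : ℂ) ^ 2 * u * v * (-(u * v) + I * (u ^ 2 - v ^ 2) + (u + I * v) * t)) *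
      ((Real.pi : ℂ) ^ 2 * u * v * (-(u * v) + I * (u ^ 2 - v ^ 2) - (u + I * v) * t))
      = (Real.pi : ℂ)^4 * u^4 * v^4 := by
    linear_combination (-((Real.pi:ℂ)^4*u^2*v^2*(u^2+2*I*u*v+I^2*v^2)))*ht
      + ((Real.pi:ℂ)^4*u^2*v^2*(u^2-v^2)*u^2)*hI
  have hs1 : ((Real.pi : ℂ) ^ 2 * u * v * (-(u * v) - I * (u ^ 2 - v ^ 2) + (u - I * v) * t)) +
      ((Real.pi : ℂ) ^ 2 * u * v * (-(u * v) - I * (u ^ 2 - v ^ 2) - (u - I * v) * t))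
      = 2 * (Real.pi : ℂ)^2 * u * v * (-(u * v) - I * (u ^ 2 - v ^ 2)) := by ring
  have hs2 : ((Real.pi : ℂ) ^ 2 * u * v * (-(u * v) + I * (u ^ 2 - v ^ 2) + (u + I * v) * t)) +
      ((Real.pi : ℂ) ^ 2 * u * v * (-(u * v) + I * (u ^ 2 - v ^ 2) - (u + I * v) * t))
      = 2 * (Real.pi : ℂ)^2 * u * v * (-(u * v) + I * (u ^ 2 - v ^ 2)) := by ring
  have hR : (X - C ((Real.pi : ℂ) ^ 2 * u * v * (-(u * v) - I * (u ^ 2 - v ^ 2) + (u - I * v) * t)))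
      * (X - C ((Real.pi : ℂ) ^ 2 * u * v * (-(u * v) - I * (u ^ 2 - v ^ 2) - (u - I * v) * t)))
      * (X - C ((Real.pi : ℂ) ^ 2 * u * v * (-(u * v) + I * (u ^ 2 - v ^ 2) + (u + I * v) * t)))
      * (X - C ((Real.pi : ℂ) ^ 2 * u * v * (-(u * v) + I * (u ^ 2 - v ^ 2) - (u + I * v) * t)))
      = (X^2 - C (((Real.pi : ℂ) ^ 2 * u * v * (-(u * v) - I * (u ^ 2 - v ^ 2) + (u - I * v) * t)) +
            ((Real.pi : ℂ) ^ 2 * u * v * (-(u * v) - I * (u ^ 2 - v ^ 2) - (u - I * v) * t))) * X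
          + C (((Real.pi : ℂ) ^ 2 * u * v * (-(u * v) - I * (u ^ 2 - v ^ 2) + (u - I * v) * t)) *
            ((Real.pi : ℂ) ^ 2 * u * v * (-(u * v) - I * (u ^ 2 - v ^ 2) - (u - I * v) * t))))
        * (X^2 - C (((Real.pi : ℂ) ^ 2 * u * v * (-(u * v) + I * (u ^ 2 - v ^ 2) + (u + I * v) * t)) +
            ((Real.pi : ℂ) ^ 2 * u * v * (-(u * v) + I * (u ^ 2 - v ^ 2) - (u + I * v) * t))) * X
          + C (((Real.pi : ℂ) ^ 2 * u * v * (-(u * v) + I * (u ^ 2 - v ^ 2) + (u + I * v) * t)) *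
            ((Real.pi : ℂ) ^ 2 * u * v * (-(u * v) + I * (u ^ 2 - v ^ 2) - (u + I * v) * t)))) := by
    simp only [map_add, map_mul]
    ring
  rw [hR, hs1, hs2, h12, h34]
  have hIC : (C I : Polynomial ℂ)^2 = -1 := by
    rw [← map_pow, hI]; simp
  simp only [map_mul, map_add, map_sub, map_neg, map_pow, map_ofNat]
  linear_combination (4 * (C ((Real.pi:ℂ)))^4 * (C u)^2 * (C v)^2 * ((C u)^2 - (C v)^2)^2 * X^2) * hIC
end
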